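/- arXiv:2007.13097 — 2 statements merged into one kernel-verified Lean document; each statement's English description precedes it below -/
import Mathlib

section
/- The function ρ(θ) = (1/2)(1/2 − θ)(1 − 1/(1+2θ)³) on the open interval (0, 1/2) attains its maximum at the unique positive root θ₀ of 16θ⁴ + 32θ³ + 24θ² + 12θ − 3, and the maximum value ρ(θ₀) satisfies ρ(θ₀) > 0.0964. -/
/-- The function ρ(θ) = (1/2)(1/2 − θ)(1 − (1+2θ)^{−3}). -/
noncomputable def rho (θ : ℝ) : ℝ := (1/2) * (1/2 - θ) * (1 - ((1 + 2*θ)^3)⁻¹)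

theorem stmt_2 (θ₀ : ℝ) (hpos : 0 < θ₀)
    (hroot : 16 * θ₀^4 + 32 * θ₀^3 + 24 * θ₀^2 + 12 * θ₀ - 3 = 0)
    (huniq : ∀ θ : ℝ, 0 < θ → 16 * θ^4 + 32 * θ^3 + 24 * θ^2 + 12 * θ - 3 = 0 → θ = θ₀) :
    θ₀ ∈ Set.Ioo (0:ℝ) (1/2) ∧
    (∀ θ ∈ Set.Ioo (0:ℝ) (1/2), rho θ ≤ rho θ₀) ∧
    rho θ₀ > 0.0964 := by
  have hlt : θ₀ < 1/2 := by
    nlinarith [pow_pos hpos 4, pow_pos hpos 3, pow_pos hpos 2]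
  have hmax : ∀ θ ∈ Set.Ioo (0:ℝ) (1/2), rho θ ≤ rho θ₀ := by
    rintro θ ⟨hθ0, hθh⟩
    have h1 : (0:ℝ) < 1 + 2*θ₀ := by linarith
    have h2 : (0:ℝ) < 1 + 2*θ := by linarith
    have h1' : ((1 + 2*θ₀)^3 : ℝ) ≠ 0 := ne_of_gt (pow_pos h1 3)
    have h2' : ((1 + 2*θ)^3 : ℝ) ≠ 0 := ne_of_gt (pow_pos h2 3)
    have key : (rho θ₀ - rho θ) * (2*(1 + 2*θ₀)^3*(1 + 2*θ)^3)
        = (θ - θ₀)*(1 + 2*θ₀)^2*(16 * θ₀^4 + 32 * θ₀^3 + 24 * θ₀^2 + 12 * θ₀ - 3)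
          + (θ - θ₀)^2 *
            (52*θ₀ + 168*θ₀^2 + 240*θ₀^3 + 192*θ₀^4 + 64*θ₀^5
             + θ*(8 + 88*θ₀ + 192*θ₀^2 + 192*θ₀^3 + 64*θ₀^4)
             + θ^2*(8 + 48*θ₀ + 96*θ₀^2 + 64*θ₀^3)) := by
      unfold rho
      field_simp
      ring
    rw [hroot, mul_zero, zero_add] at key
    have ha : (0:ℝ) ≤ θ := hθ0.le
    have hb : (0:ℝ) ≤ θ₀ := hpos.le
    have hS : (0:ℝ) ≤ 52*θ₀ + 168*θ₀^2 + 240*θ₀^3 + 192*θ₀^4 + 64*θ₀^5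
             + θ*(8 + 88*θ₀ + 192*θ₀^2 + 192*θ₀^3 + 64*θ₀^4)
             + θ^2*(8 + 48*θ₀ + 96*θ₀^2 + 64*θ₀^3) := by
      have m1 : (0:ℝ) ≤ 8 + 88*θ₀ + 192*θ₀^2 + 192*θ₀^3 + 64*θ₀^4 := by
        nlinarith [pow_nonneg hb 2, pow_nonneg hb 3, pow_nonneg hb 4]
      have m2 : (0:ℝ) ≤ 8 + 48*θ₀ + 96*θ₀^2 + 64*θ₀^3 := by
        nlinarith [pow_nonneg hb 2, pow_nonneg hb 3]
      have m3 : (0:ℝ) ≤ 52*θ₀ + 168*θ₀^2 + 240*θ₀^3 + 192*θ₀^4 + 64*θ₀^5 := by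
        nlinarith [pow_nonneg hb 2, pow_nonneg hb 3, pow_nonneg hb 4, pow_nonneg hb 5]
      have := mul_nonneg ha m1
      have := mul_nonneg (mul_nonneg ha ha) m2
      nlinarith [sq_nonneg θ]
    have hP : (0:ℝ) < 2*(1 + 2*θ₀)^3*(1 + 2*θ)^3 :=
      mul_pos (mul_pos two_pos (pow_pos h1 3)) (pow_pos h2 3)
    have hN : (0:ℝ) ≤ (rho θ₀ - rho θ) * (2*(1 + 2*θ₀)^3*(1 + 2*θ)^3) := by
      rw [key]; exact mul_nonneg (sq_nonneg (θ - θ₀)) hS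
    have := (mul_nonneg_iff_of_pos_right hP).mp hN
    linarith
  refine ⟨⟨hpos, hlt⟩, hmax, ?_⟩
  have hc : rho (0.1735 : ℝ) ≤ rho θ₀ := hmax 0.1735 (by norm_num)
  have : (0.0964 : ℝ) < rho 0.1735 := by
    unfold rho
    norm_num
  linarith
end

section
/- In the ring of Gaussian integers ℤ[i], every ideal coprime to 2 has a unique generator congruent to 1 modulo (1+i)³. -/
/-!
Write `π = 1 + i`. A Gaussian integer `z` is divisible by `π³ = -2 + 2i` iff `z.re ± z.im ≡ 0 mod 4`,
and from this one reads off that the four units `±1, ±i` represent the four classes of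
`(ℤ[i]/π³)ˣ`, each exactly once. Hence a generator `g` of an odd ideal has exactly one
associate `≡ 1 mod π³`.
-/

local notation "π" => (⟨1, 1⟩ : GaussianInt)

theorem existsUnique_associated_dvd_sub_one {R : Type*} [CommRing R] {q g : R}
    (hunits : ∀ u : Rˣ, q ∣ (u : R) - 1 → u = 1) (hg : ∃ u : Rˣ, q ∣ g * u - 1) :
    ∃! d : R, Associated g d ∧ q ∣ d - 1 := by
  obtain ⟨u, hu⟩ := hg
  refine ⟨g * u, ⟨⟨u, rfl⟩, hu⟩, ?_⟩
  rintro _ ⟨⟨v, rfl⟩, hv⟩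
  -- `g * u` is a unit modulo `q`, so it can be cancelled from `q ∣ g * u * (u⁻¹ * v - 1)`.
  have hcop : IsCoprime (g * u) q := by
    obtain ⟨k, hk⟩ := hu
    exact ⟨1, -k, by linear_combination hk⟩
  have hdiff : q ∣ g * u * ((u⁻¹ * v : Rˣ) - 1) := by
    convert dvd_sub hv hu using 1
    push_cast
    linear_combination g * v * u.mul_inv
  rw [← mul_inv_cancel_left u v, hunits _ (hcop.symm.dvd_of_dvd_mul_left hdiff), mul_one]

theorem GaussianInt.one_add_I_dvd_iff (z : GaussianInt) : π ∣ z ↔ 2 ∣ z.re + z.im := by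
  constructor
  · rintro ⟨w, rfl⟩
    exact ⟨w.re, by simp [Zsqrtd.re_mul, Zsqrtd.im_mul]; ring⟩
  · rintro ⟨k, hk⟩
    refine ⟨⟨k, z.im - k⟩, ?_⟩
    ext <;> simp [Zsqrtd.re_mul, Zsqrtd.im_mul]; omega

theorem GaussianInt.one_add_I_pow_three_dvd_iff (z : GaussianInt) :
    π ^ 3 ∣ z ↔ 4 ∣ z.re + z.im ∧ 4 ∣ z.re - z.im := by
  rw [show π ^ 3 = ⟨-2, 2⟩ by decide]
  constructor
  · rintro ⟨w, rfl⟩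
    exact ⟨⟨-w.im, by simp [Zsqrtd.re_mul, Zsqrtd.im_mul]; ring⟩,
      ⟨-w.re, by simp [Zsqrtd.re_mul, Zsqrtd.im_mul]; ring⟩⟩
  · rintro ⟨⟨x, hx⟩, ⟨y, hy⟩⟩
    refine ⟨⟨-y, -x⟩, ?_⟩
    ext <;> simp [Zsqrtd.re_mul, Zsqrtd.im_mul] <;> omega

theorem GaussianInt.eq_one_of_one_add_I_pow_three_dvd_sub_one (u : GaussianIntˣ)
    (hu : π ^ 3 ∣ (u : GaussianInt) - 1) : u = 1 := by
  have hnorm : (u : GaussianInt).re * (u : GaussianInt).re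
      + (u : GaussianInt).im * (u : GaussianInt).im = 1 := by
    have := (Zsqrtd.norm_eq_one_iff' (by norm_num) _).mpr u.isUnit
    rw [Zsqrtd.norm_def] at this
    linarith
  rw [one_add_I_pow_three_dvd_iff] at hu
  simp only [Zsqrtd.re_sub, Zsqrtd.im_sub, Zsqrtd.re_one, Zsqrtd.im_one] at hu
  have hre : -1 ≤ (u : GaussianInt).re ∧ (u : GaussianInt).re ≤ 1 := by constructor <;> nlinarith
  have him : -1 ≤ (u : GaussianInt).im ∧ (u : GaussianInt).im ≤ 1 := by constructor <;> nlinarith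
  ext <;> simp <;> omega

theorem GaussianInt.exists_unit_one_add_I_pow_three_dvd_mul_sub_one {g : GaussianInt}
    (hg : ¬ π ∣ g) : ∃ u : GaussianIntˣ, π ^ 3 ∣ g * u - 1 := by
  rw [one_add_I_dvd_iff] at hg
  have hI : (⟨0, 1⟩ : GaussianInt) * ⟨0, -1⟩ = 1 := by decide
  simp only [one_add_I_pow_three_dvd_iff, Zsqrtd.re_sub, Zsqrtd.im_sub, Zsqrtd.re_mul,
    Zsqrtd.im_mul, Zsqrtd.re_one, Zsqrtd.im_one]
  by_cases h₁ : 4 ∣ g.re + g.im - 1 <;> by_cases h₂ : 4 ∣ g.re - g.im - 1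
  · exact ⟨1, by simp; omega⟩
  · exact ⟨.mkOfMulEqOne _ _ ((mul_comm _ _).trans hI), by simp; omega⟩
  · exact ⟨.mkOfMulEqOne _ _ hI, by simp; omega⟩
  · exact ⟨-1, by simp; omega⟩

theorem stmt_9 (I : Ideal GaussianInt)
    (hI : I ⊔ Ideal.span {(2 : GaussianInt)} = ⊤) :
    ∃! d : GaussianInt, Ideal.span {d} = I ∧ ((⟨1, 1⟩ : GaussianInt)) ^ 3 ∣ d - 1 := by
  obtain ⟨g, rfl⟩ := (IsPrincipalIdealRing.principal I).principal
  rw [Ideal.submodule_span_eq] at hI ⊢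
  have hodd : ¬ π ∣ g := fun h ↦ by
    have hcop : IsCoprime g 2 := by
      rwa [← Ideal.isCoprime_span_singleton_iff, Ideal.isCoprime_iff_sup_eq]
    -- `π` divides `2` but has norm `2`, so it is not a unit.
    absurd Zsqrtd.norm_eq_one_iff.mpr (hcop.isUnit_of_dvd' h ⟨⟨1, -1⟩, by decide⟩)
    decide
  simpa only [Ideal.span_singleton_eq_span_singleton, Associated.comm] using
    existsUnique_associated_dvd_sub_one GaussianInt.eq_one_of_one_add_I_pow_three_dvd_sub_one
      (GaussianInt.exists_unit_one_add_I_pow_three_dvd_mul_sub_one hodd)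
end
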